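/- Let ω be an alternating bilinear form on a free module M of rank 2m over a commutative ring R, expressed with respect to a symplectic basis so that ω = Σ_{i=1}^m s_i* ∧ s_{m+i}*. Then the m-fold wedge power ω^m = ω ∧ … ∧ ω equals m! · (−1)^⌊m/2⌋ · s_1* ∧ s_2* ∧ … ∧ s_{2m}*. -/

import Mathlib

/-!
The `m` terms `ωᵢ = sᵢ* ∧ s*ₘ₊ᵢ` of `ω` are of even degree, so they commute with each other, and
each squares to zero. For commuting square-zero elements the multinomial expansion of
`(ω₁ + ⋯ + ωₘ)ᵐ` keeps only the `m!` terms using every `ωᵢ` once, so `ωᵐ = m! · ω₁ ⋯ ωₘ`.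
Sorting `s₁* s*ₘ₊₁ s₂* s*ₘ₊₂ ⋯` into `s₁* ⋯ s*₂ₘ` moves `s*ₘ₊ᵢ` past `m - i` factors, costing the
sign `(-1)^(m choose 2) = (-1)^⌊m/2⌋`.
-/

section

variable {A : Type*} [Ring A]

theorem Commute.add_pow_succ_of_mul_self_eq_zero {x y : A} (hxy : Commute x y)
    (hx : x * x = 0) (n : ℕ) : (x + y) ^ (n + 1) = y ^ (n + 1) + (n + 1) • (x * y ^ n) := by
  induction n with
  | zero => simp [add_comm]
  | succ n ih =>
    have hxyn : x * y ^ (n + 1) = y * (x * y ^ n) := by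
      rw [← mul_assoc, ← hxy.eq, mul_assoc, pow_succ']
    rw [pow_succ', ih, add_mul, mul_add, mul_add, mul_smul_comm, mul_smul_comm, ← mul_assoc x x,
      hx, zero_mul, smul_zero, add_zero, ← pow_succ', ← hxyn]
    simp only [add_smul, one_smul]
    abel

section SquareZero

variable {n : ℕ} {x : Fin n → A}

theorem sum_pow_succ_eq_zero (hc : ∀ i j, Commute (x i) (x j)) (hx : ∀ i, x i * x i = 0) :
    (∑ i, x i) ^ (n + 1) = 0 := by
  induction n with
  | zero => simp
  | succ n ih =>
    have htail := ih (fun i j => hc i.succ j.succ) (fun i => hx i.succ)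
    rw [Fin.sum_univ_succ, Commute.add_pow_succ_of_mul_self_eq_zero
      (Commute.sum_right _ _ _ fun i _ => hc 0 i.succ) (hx 0), pow_succ, htail]
    simp

theorem sum_pow_eq_factorial_smul_prod (hc : ∀ i j, Commute (x i) (x j))
    (hx : ∀ i, x i * x i = 0) : (∑ i, x i) ^ n = n.factorial • (List.ofFn x).prod := by
  induction n with
  | zero => simp
  | succ n ih =>
    rw [Fin.sum_univ_succ, Commute.add_pow_succ_of_mul_self_eq_zero
      (Commute.sum_right _ _ _ fun i _ => hc 0 i.succ) (hx 0),
      sum_pow_succ_eq_zero (fun i j => hc i.succ j.succ) (fun i => hx i.succ),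
      ih (fun i j => hc i.succ j.succ) (fun i => hx i.succ), List.ofFn_succ, List.prod_cons,
      zero_add, mul_smul_comm, smul_smul, Nat.factorial_succ]

end SquareZero

theorem mul_prod_ofFn_of_anticommute {n : ℕ} (y : A) (a : Fin n → A)
    (h : ∀ i, y * a i = -(a i * y)) :
    y * (List.ofFn a).prod = (-1 : ℤ) ^ n • ((List.ofFn a).prod * y) := by
  induction n with
  | zero => simp
  | succ n ih =>
    rw [List.ofFn_succ, List.prod_cons, ← mul_assoc, h 0, neg_mul, mul_assoc,
      ih _ fun i => h i.succ, mul_smul_comm, pow_succ, mul_neg_one, neg_smul, mul_assoc]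

theorem prod_ofFn_mul_of_anticommute {n : ℕ} (a c : Fin n → A)
    (h : ∀ i j, c j * a i = -(a i * c j)) :
    (List.ofFn fun i => a i * c i).prod
      = (-1 : ℤ) ^ n.choose 2 • ((List.ofFn a).prod * (List.ofFn c).prod) := by
  induction n with
  | zero => simp
  | succ n ih =>
    have hmove := mul_prod_ofFn_of_anticommute (c 0) (fun i => a i.succ) fun i => h i.succ 0
    rw [List.ofFn_succ, List.prod_cons, ih _ _ fun i j => h i.succ j.succ, List.ofFn_succ,
      List.ofFn_succ, List.prod_cons, List.prod_cons, Nat.choose_succ_succ', Nat.choose_one_right,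
      mul_smul_comm, mul_assoc, ← mul_assoc (c 0), hmove]
    simp only [smul_mul_assoc, mul_smul_comm, smul_smul, ← pow_add, mul_assoc, add_comm]

theorem neg_one_pow_choose_two (n : ℕ) : (-1 : ℤ) ^ n.choose 2 = (-1) ^ (n / 2) := by
  induction n using Nat.twoStepInduction with
  | zero => rfl
  | one => rfl
  | more n ih _ =>
    have hchoose : (n + 2).choose 2 = n.choose 2 + (2 * n + 1) := by
      rw [Nat.choose_succ_succ', Nat.choose_succ_succ' n 1, Nat.choose_one_right,
        Nat.choose_one_right]
      ring
    rw [hchoose, pow_add, ih, Odd.neg_one_pow ⟨n, rfl⟩, (by omega : (n + 2) / 2 = n / 2 + 1),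
      pow_succ]

theorem commute_mul_of_anticommute {x a b : A} (ha : x * a = -(a * x)) (hb : x * b = -(b * x)) :
    Commute x (a * b) := by
  show x * (a * b) = a * b * x
  rw [← mul_assoc, ha, neg_mul, mul_assoc, hb, mul_neg, neg_neg, mul_assoc]

theorem mul_mul_self_eq_zero_of_anticommute {a b : A} (hab : b * a = -(a * b)) (hb : b * b = 0) :
    a * b * (a * b) = 0 := by
  rw [mul_assoc, ← mul_assoc b, hab, neg_mul, mul_assoc, hb, mul_zero, neg_zero, mul_zero]

theorem sum_mul_castAdd_natAdd_pow {m : ℕ} (e : Fin (m + m) → A)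
    (he : ∀ i j, e j * e i = -(e i * e j)) (he_sq : ∀ i, e i * e i = 0) :
    (∑ i : Fin m, e (Fin.castAdd m i) * e (Fin.natAdd m i)) ^ m
      = m.factorial • (-1 : ℤ) ^ (m / 2) • (List.ofFn e).prod := by
  have hcomm (i j : Fin m) : Commute (e (Fin.castAdd m i) * e (Fin.natAdd m i))
      (e (Fin.castAdd m j) * e (Fin.natAdd m j)) :=
    (commute_mul_of_anticommute (he _ _) (he _ _)).mul_left
      (commute_mul_of_anticommute (he _ _) (he _ _))
  rw [sum_pow_eq_factorial_smul_prod hcomm fun i => mul_mul_self_eq_zero_of_anticommute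
      (he _ _) (he_sq _), prod_ofFn_mul_of_anticommute _ _ fun i j => he _ _,
    neg_one_pow_choose_two, List.ofFn_add, List.prod_append]
  rfl

end

/-- In the exterior algebra of the dual module of a free module of rank
`m + m`, the `m`-th power of `ω = Σ_{i} s_i* ∧ s_{m+i}*` equals
`m! · (−1)^⌊m/2⌋ · s_1* ∧ … ∧ s_{2m}*`.  Here `s_i* = b.coord i` are the dual basis
functionals, `ι` is the canonical embedding into the exterior algebra, products of
`ι`-images are wedge products, and the top generator is the ordered product of all
`ι (b.coord i)`. -/
theorem wedge_pow_symplectic_form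
    {R : Type*} [CommRing R] {M : Type*} [AddCommGroup M] [Module R M]
    (m : ℕ) (b : Module.Basis (Fin (m + m)) R M) :
    (∑ i : Fin m,
        ExteriorAlgebra.ι R (M := Module.Dual R M) (b.coord (Fin.castAdd m i)) *
          ExteriorAlgebra.ι R (M := Module.Dual R M) (b.coord (Fin.natAdd m i))) ^ m
      = ((m.factorial : R) * (-1 : R) ^ (m / 2)) •
          ((List.finRange (m + m)).map fun i =>
            ExteriorAlgebra.ι R (M := Module.Dual R M) (b.coord i)).prod := by
  rw [sum_mul_castAdd_natAdd_pow _ (fun i j => eq_neg_of_add_eq_zero_left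
      (ExteriorAlgebra.ι_add_mul_swap _ _)) fun i => ExteriorAlgebra.ι_sq_zero _,
    ← List.ofFn_eq_map, mul_smul, Nat.cast_smul_eq_nsmul, ← Int.cast_smul_eq_zsmul R,
    Int.cast_pow, Int.cast_neg, Int.cast_one]
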